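/- If P is a closed λ-term such that (P b_{n+1}) ≃β bₙ for all n ∈ ℕ (a Predecessor for the numeral system b), then the closed λ-term P' = λn.(P <F, n> T) is a Zero Test for the numeral system a, i.e. (P' a₀) ≃β T and (P' a_{n+1}) ≃β F for all n ∈ ℕ. Consequently the numeral system b has no Predecessor. -/

import Mathlib

/-- Untyped λ-terms in de Bruijn notation. -/
inductive Lam : Type
  | var : ℕ → Lam
  | app : Lam → Lam → Lam
  | lam : Lam → Lam
  deriving DecidableEq

namespace Lam

/-- Shift by one the free variables with index ≥ `d`. -/
def lift (d : ℕ) : Lam → Lam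
  | var n => if n < d then var n else var (n + 1)
  | app M N => app (lift d M) (lift d N)
  | lam M => lam (lift (d + 1) M)

/-- Capture-avoiding substitution of `N` for the free variable of index `n`. -/
def subst : Lam → ℕ → Lam → Lam
  | var m, n, N => if m = n then N else if n < m then var (m - 1) else var m
  | app M₁ M₂, n, N => app (subst M₁ n N) (subst M₂ n N)
  | lam M, n, N => lam (subst M (n + 1) (lift 0 N))

/-- One-step β-reduction (contraction of a β-redex anywhere in the term). -/
inductive Step : Lam → Lam → Prop
  | beta (M N : Lam) : Step (app (lam M) N) (subst M 0 N)
  | appL {M M' : Lam} (N : Lam) : Step M M' → Step (app M N) (app M' N)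
  | appR (M : Lam) {N N' : Lam} : Step N N' → Step (app M N) (app M N')
  | lam {M M' : Lam} : Step M M' → Step (Lam.lam M) (Lam.lam M')

/-- β-equivalence: the equivalence relation generated by one-step β-reduction. -/
def BetaEq : Lam → Lam → Prop := Relation.EqvGen Step

/-- The variable of index `n` occurs free in the term. -/
def HasFree : Lam → ℕ → Prop
  | var m, n => m = n
  | app M N, n => HasFree M n ∨ HasFree N n
  | lam M, n => HasFree M (n + 1)

/-- A term is closed if it has no free variables. -/
def Closed (M : Lam) : Prop := ∀ n, ¬ HasFree M n

/-- A term is β-normal: it contains no β-redex. -/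
def IsBetaNormal : Lam → Prop
  | app (lam _) _ => False
  | app M N => IsBetaNormal M ∧ IsBetaNormal N
  | lam M => IsBetaNormal M
  | var _ => True

/-- A term is βη-normal: it contains no β-redex and no η-redex
`λx.(M x)` with `x` not free in `M`. -/
def IsBetaEtaNormal : Lam → Prop
  | app (lam _) _ => False
  | app M N => IsBetaEtaNormal M ∧ IsBetaEtaNormal N
  | lam (app M (var 0)) => HasFree M 0 ∧ IsBetaEtaNormal (app M (var 0))
  | lam M => IsBetaEtaNormal M
  | var _ => True

/-- `I = λx.x`. -/
def I : Lam := lam (var 0)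

/-- `T = λxλy.x`. -/
def T : Lam := lam (lam (var 1))

/-- `F = λxλy.y`. -/
def F : Lam := lam (lam (var 0))

/-- The pair `<M,N> = λx.(x M N)` (the binder shifts the free variables of `M,N`). -/
def pair (M N : Lam) : Lam := lam (app (app (var 0) (lift 0 M)) (lift 0 N))

end Lam

/-- The numeral system `a` : `aₙ = λx₁…λxₙ.I` (so `a₀ = I`). -/
def Lam.sysA : ℕ → Lam
  | 0 => Lam.I
  | n + 1 => Lam.lam (Lam.sysA n)

/-- The numeral system `b` : `b₀ = <T, I>` and `bₙ = <F, a_{n-1}>` for `n ≥ 1`. -/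
def Lam.sysB : ℕ → Lam
  | 0 => Lam.pair Lam.T Lam.I
  | n + 1 => Lam.pair Lam.F (Lam.sysA n)


/-!
The numeral `aⱼ = λx₁…λxⱼ.I` swallows `j` arguments, so within fewer than `j` reduction steps it
behaves like any term in its place. Hence if `Z a₀ ↠ T` in `m` steps, replaying that reduction on
`Z a_{m+2}` reaches `T` with some subterms replaced by numerals `aⱼ`, `j ≥ 2`: a normal form
other than `F`, so `Z a_{m+2} ≄β F` and `a` has no Zero Test. A Predecessor `P` of `b` would
give one, since `P' aₙ → P <F, aₙ> T = P b_{n+1} T ≃β bₙ T`, and the pair `bₙ` applied to `T`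
returns its first component, `T` for `n = 0` and `F` otherwise.
-/

namespace Lam

theorem lift_lift (M : Lam) {i k : ℕ} (h : i ≤ k) :
    lift (k + 1) (lift i M) = lift i (lift k M) := by
  induction M generalizing i k with
  | var n => simp only [lift]; split_ifs <;> simp only [lift] <;> split_ifs <;> grind
  | app A B ihA ihB => simp [lift, ihA h, ihB h]
  | lam A ih => simp [lift, ih (Nat.add_le_add_right h 1)]

theorem lift_subst_above (M N : Lam) {i j : ℕ} (h : j ≤ i) :
    lift i (subst M j N) = subst (lift (i + 1) M) j (lift i N) := by
  induction M generalizing N i j with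
  | var m => simp only [subst, lift]; split_ifs <;> simp only [lift, subst] <;> split_ifs <;> grind
  | app A B ihA ihB => simp [lift, subst, ihA _ h, ihB _ h]
  | lam A ih =>
    simp only [lift, subst]
    rw [ih _ (Nat.add_le_add_right h 1), lift_lift _ (Nat.zero_le i)]

theorem lift_subst_below (M N : Lam) {i j : ℕ} (h : i ≤ j) :
    lift i (subst M j N) = subst (lift i M) (j + 1) (lift i N) := by
  induction M generalizing N i j with
  | var m => simp only [subst, lift]; split_ifs <;> simp only [lift, subst] <;> split_ifs <;> grind
  | app A B ihA ihB => simp [lift, subst, ihA _ h, ihB _ h]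
  | lam A ih =>
    simp only [lift, subst]
    rw [ih _ (Nat.add_le_add_right h 1), lift_lift _ (Nat.zero_le i)]

theorem subst_lift (M N : Lam) (k : ℕ) : subst (lift k M) k N = M := by
  induction M generalizing k N with
  | var m => simp only [lift]; split_ifs <;> simp only [subst] <;> split_ifs <;> grind
  | app A B ihA ihB => simp [lift, subst, ihA, ihB]
  | lam A ih => simp [lift, subst, ih]

theorem subst_subst (M u v : Lam) {i j : ℕ} (h : i ≤ j) :
    subst (subst M i u) j v = subst (subst M (j + 1) (lift i v)) i (subst u j v) := by
  induction M generalizing u v i j with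
  | var m =>
    simp only [subst]; split_ifs <;> simp only [subst, subst_lift] <;> (try split_ifs) <;> grind
  | app A B ihA ihB => simp [subst, ihA _ _ h, ihB _ _ h]
  | lam A ih =>
    simp only [subst]
    rw [ih _ _ (Nat.add_le_add_right h 1), lift_lift _ (Nat.zero_le i),
      ← lift_subst_below _ _ (Nat.zero_le j)]

theorem lift_eq_self {M : Lam} {d : ℕ} (h : ∀ n, d ≤ n → ¬ HasFree M n) : lift d M = M := by
  induction M generalizing d with
  | var m => simp only [lift, HasFree] at h ⊢; grind
  | app A B ihA ihB =>
    simp only [HasFree, not_or] at h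
    rw [lift, ihA fun n hn => (h n hn).1, ihB fun n hn => (h n hn).2]
  | lam A ih =>
    rw [lift, ih fun n hn => ?_]
    obtain ⟨k, rfl⟩ := Nat.exists_eq_add_of_le' (Nat.zero_lt_of_lt hn)
    exact h k (by omega)

theorem subst_eq_self {M : Lam} {d : ℕ} (N : Lam) (h : ∀ n, d ≤ n → ¬ HasFree M n) :
    subst M d N = M := by
  induction M generalizing d N with
  | var m => simp only [subst, HasFree] at h ⊢; grind
  | app A B ihA ihB =>
    simp only [HasFree, not_or] at h
    rw [subst, ihA _ fun n hn => (h n hn).1, ihB _ fun n hn => (h n hn).2]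
  | lam A ih =>
    rw [subst, ih _ fun n hn => ?_]
    obtain ⟨k, rfl⟩ := Nat.exists_eq_add_of_le' (Nat.zero_lt_of_lt hn)
    exact h k (by omega)

theorem Closed.lift_eq_self {M : Lam} (hM : Closed M) (d : ℕ) : lift d M = M :=
  Lam.lift_eq_self fun n _ => hM n

theorem Closed.subst_eq_self {M : Lam} (hM : Closed M) (d : ℕ) (N : Lam) : subst M d N = M :=
  Lam.subst_eq_self N fun n _ => hM n

open Relation

local infix:50 " ↠β " => ReflTransGen Step

theorem Step.reflTransGen_appL {M M' : Lam} (N : Lam) (h : M ↠β M') : app M N ↠β app M' N :=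
  ReflTransGen.lift (fun X => app X N) (fun _ _ => Step.appL N) _ _ h

theorem Step.reflTransGen_appR (M : Lam) {N N' : Lam} (h : N ↠β N') : app M N ↠β app M N' :=
  ReflTransGen.lift (app M) (fun _ _ => Step.appR M) _ _ h

theorem Step.reflTransGen_lam {M M' : Lam} (h : M ↠β M') : Lam.lam M ↠β Lam.lam M' :=
  ReflTransGen.lift Lam.lam (fun _ _ => Step.lam) _ _ h

inductive Par : Lam → Lam → Prop
  | var (n : ℕ) : Par (var n) (var n)
  | lam {M M' : Lam} : Par M M' → Par (lam M) (lam M')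
  | app {M M' N N' : Lam} : Par M M' → Par N N' → Par (app M N) (app M' N')
  | beta {M M' N N' : Lam} : Par M M' → Par N N' → Par (app (lam M) N) (subst M' 0 N')

namespace Par

theorem refl : ∀ M, Par M M
  | .var n => .var n
  | .app M N => .app (refl M) (refl N)
  | .lam M => .lam (refl M)

theorem lift {M M' : Lam} (h : Par M M') (d : ℕ) : Par (Lam.lift d M) (Lam.lift d M') := by
  induction h generalizing d with
  | var n => unfold Lam.lift; split <;> exact .var _
  | lam _ ih => exact .lam (ih (d + 1))
  | app _ _ ih₁ ih₂ => exact .app (ih₁ d) (ih₂ d)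
  | beta _ _ ih₁ ih₂ =>
    rw [lift_subst_above _ _ (Nat.zero_le d)]
    exact .beta (ih₁ (d + 1)) (ih₂ d)

theorem subst {M M' N N' : Lam} (h : Par M M') (hN : Par N N') (n : ℕ) :
    Par (Lam.subst M n N) (Lam.subst M' n N') := by
  induction h generalizing n N N' with
  | var m => unfold Lam.subst; split_ifs <;> first | exact hN | exact .var _
  | lam _ ih => exact .lam (ih (hN.lift 0) (n + 1))
  | app _ _ ih₁ ih₂ => exact .app (ih₁ hN n) (ih₂ hN n)
  | beta _ _ ih₁ ih₂ =>
    rw [subst_subst _ _ _ (Nat.zero_le n)]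
    exact .beta (ih₁ (hN.lift 0) (n + 1)) (ih₂ hN n)

def completeDevelopment : Lam → Lam
  | .var n => .var n
  | .lam M => .lam (completeDevelopment M)
  | .app (.lam M) N => Lam.subst (completeDevelopment M) 0 (completeDevelopment N)
  | .app M N => .app (completeDevelopment M) (completeDevelopment N)

theorem par_completeDevelopment {M N : Lam} (h : Par M N) : Par N (completeDevelopment M) := by
  induction h with
  | var n => exact .var n
  | lam _ ih => exact .lam ih
  | @app M M' N N' hM _ ih₁ ih₂ =>
    cases hM with
    | lam hM' => cases ih₁ with | lam ih₁ => exact .beta ih₁ ih₂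
    | _ => exact .app ih₁ ih₂
  | beta _ _ ih₁ ih₂ => exact ih₁.subst ih₂ 0

theorem reflTransGen_step {M N : Lam} (h : Par M N) : M ↠β N := by
  induction h with
  | var n => rfl
  | lam _ ih => exact Step.reflTransGen_lam ih
  | app _ _ ih₁ ih₂ => exact (Step.reflTransGen_appL _ ih₁).trans (Step.reflTransGen_appR _ ih₂)
  | beta _ _ ih₁ ih₂ =>
    exact ((Step.reflTransGen_appL _ (Step.reflTransGen_lam ih₁)).trans
      (Step.reflTransGen_appR _ ih₂)).tail (.beta _ _)

end Par

theorem Step.par {M N : Lam} (h : Step M N) : Par M N := by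
  induction h with
  | beta M N => exact .beta (.refl M) (.refl N)
  | appL N _ ih => exact .app ih (.refl N)
  | appR M _ ih => exact .app (.refl M) ih
  | lam _ ih => exact .lam ih

theorem reflTransGen_par_eq : ReflTransGen Par = ReflTransGen Step :=
  le_antisymm (reflTransGen_closed fun _ _ => Par.reflTransGen_step)
    (ReflTransGen.mono fun _ _ => Step.par)

theorem BetaEq.join {M N : Lam} (h : BetaEq M N) : Join (ReflTransGen Step) M N := by
  -- Church–Rosser: the complete development closes every peak of parallel reductions.
  have hequiv : Equivalence (Join (ReflTransGen Step)) := by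
    rw [← reflTransGen_par_eq]
    exact equivalence_join_reflTransGen fun M _ _ h₁ h₂ => ⟨Par.completeDevelopment M,
      .single h₁.par_completeDevelopment, .single h₂.par_completeDevelopment⟩
  exact hequiv.eqvGen_iff.mp (EqvGen.mono (fun _ N h => ⟨N, .single h, .refl⟩) _ _ h)

theorem BetaEq.of_reflTransGen {M N : Lam} (h : M ↠β N) : BetaEq M N :=
  EqvGen.reflTransGen_le_eqvGen Step _ _ h

theorem BetaEq.app_left {M M' : Lam} (N : Lam) (h : BetaEq M M') :
    BetaEq (app M N) (app M' N) := by
  induction h with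
  | rel _ _ h => exact .rel _ _ (.appL N h)
  | refl => exact .refl _
  | symm _ _ _ ih => exact ih.symm
  | trans _ _ _ _ _ ih₁ ih₂ => exact ih₁.trans _ _ _ ih₂

theorem IsBetaNormal.not_step {M N : Lam} (hM : IsBetaNormal M) : ¬ Step M N := by
  intro h
  induction h with
  | beta => exact hM
  | @appL M _ _ _ ih => cases M <;> first | exact hM | exact ih hM.1
  | @appR M _ _ _ ih => cases M <;> first | exact hM | exact ih hM.2
  | lam _ ih => exact ih hM

theorem IsBetaNormal.eq_of_reflTransGen {M N : Lam} (hM : IsBetaNormal M) (h : M ↠β N) : N = M :=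
  (reflTransGen_iff_eq fun _ => hM.not_step).mp h

theorem BetaEq.eq_of_isBetaNormal {M N : Lam} (h : BetaEq M N)
    (hM : IsBetaNormal M) (hN : IsBetaNormal N) : M = N := by
  obtain ⟨L, hML, hNL⟩ := h.join
  rw [← hM.eq_of_reflTransGen hML, ← hN.eq_of_reflTransGen hNL]

theorem closed_sysA (k : ℕ) : Closed (sysA k) := by
  induction k with
  | zero => intro n h; exact Nat.succ_ne_zero n h.symm
  | succ k ih => intro n; exact ih (n + 1)

theorem isBetaNormal_sysA (k : ℕ) : IsBetaNormal (sysA k) := by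
  induction k with
  | zero => trivial
  | succ k ih => exact ih

theorem sysA_ne_F {k : ℕ} (hk : 2 ≤ k) : sysA k ≠ F := by
  obtain ⟨j, rfl⟩ := Nat.exists_eq_add_of_le' hk
  rcases j with _ | _ | j <;> simp [sysA, F, I]

/-- A reduction step of `M` is matched by `N` at the cost of one unit of `s`: where the λ of the
contracted redex is masked, the matching step strips one λ off the masking numeral. -/
inductive Masked : ℕ → Lam → Lam → Prop
  | var (s n : ℕ) : Masked s (var n) (var n)
  | app {s : ℕ} {M M' N N' : Lam} : Masked s M M' → Masked s N N' → Masked s (app M N) (app M' N')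
  | lam {s : ℕ} {M M' : Lam} : Masked s M M' → Masked s (lam M) (lam M')
  | numeral {s j : ℕ} (M : Lam) (hj : s + 2 ≤ j) : Masked s M (sysA j)

namespace Masked

theorem refl (s : ℕ) : ∀ M, Masked s M M
  | .var n => .var s n
  | .app M N => .app (refl s M) (refl s N)
  | .lam M => .lam (refl s M)

theorem mono {s t : ℕ} {M N : Lam} (h : Masked s M N) (hts : t ≤ s) : Masked t M N := by
  induction h with
  | var => exact .var _ _
  | app _ _ ih₁ ih₂ => exact .app ih₁ ih₂
  | lam _ ih => exact .lam ih
  | numeral M hj => exact .numeral M (by omega)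

theorem lift {s : ℕ} {M N : Lam} (h : Masked s M N) (d : ℕ) :
    Masked s (Lam.lift d M) (Lam.lift d N) := by
  induction h generalizing d with
  | var => unfold Lam.lift; split <;> exact .var _ _
  | app _ _ ih₁ ih₂ => exact .app (ih₁ d) (ih₂ d)
  | lam _ ih => exact .lam (ih (d + 1))
  | numeral M hj => rw [(closed_sysA _).lift_eq_self]; exact .numeral _ hj

theorem subst {s : ℕ} {M M' N N' : Lam} (h : Masked s M M') (hN : Masked s N N') (n : ℕ) :
    Masked s (Lam.subst M n N) (Lam.subst M' n N') := by
  induction h generalizing n N N' with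
  | var => unfold Lam.subst; split_ifs <;> first | exact hN | exact .var _ _
  | app _ _ ih₁ ih₂ => exact .app (ih₁ hN n) (ih₂ hN n)
  | lam _ ih => exact .lam (ih (hN.lift 0) (n + 1))
  | numeral M hj => rw [(closed_sysA _).subst_eq_self]; exact .numeral _ hj

theorem exists_reflTransGen_of_step {s : ℕ} {M M' N : Lam} (h : Masked (s + 1) M N)
    (hstep : Step M M') : ∃ N', N ↠β N' ∧ Masked s M' N' := by
  induction hstep generalizing N s with
  | beta =>
    cases h with
    | numeral _ hj => exact ⟨_, .refl, .numeral _ (by omega)⟩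
    | @app _ _ _ N₂ h₁ h₂ =>
      cases h₁ with
      | lam hP => exact ⟨_, .single (.beta _ _), (hP.subst h₂ 0).mono (Nat.le_succ s)⟩
      | @numeral j _ hj =>
        obtain ⟨j, rfl⟩ := Nat.exists_eq_add_of_le' (show 1 ≤ j by omega)
        refine ⟨sysA j, .single ?_, .numeral _ (by omega)⟩
        have hβ := Step.beta (sysA j) N₂
        rwa [(closed_sysA j).subst_eq_self] at hβ
  | appL _ _ ih =>
    cases h with
    | numeral _ hj => exact ⟨_, .refl, .numeral _ (by omega)⟩
    | app h₁ h₂ =>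
      obtain ⟨N₁', hs, h₁'⟩ := ih h₁
      exact ⟨_, Step.reflTransGen_appL _ hs, .app h₁' (h₂.mono (Nat.le_succ s))⟩
  | appR _ _ ih =>
    cases h with
    | numeral _ hj => exact ⟨_, .refl, .numeral _ (by omega)⟩
    | app h₁ h₂ =>
      obtain ⟨N₂', hs, h₂'⟩ := ih h₂
      exact ⟨_, Step.reflTransGen_appR _ hs, .app (h₁.mono (Nat.le_succ s)) h₂'⟩
  | lam _ ih =>
    cases h with
    | numeral _ hj => exact ⟨_, .refl, .numeral _ (by omega)⟩
    | lam h₁ =>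
      obtain ⟨N₁', hs, h₁'⟩ := ih h₁
      exact ⟨_, Step.reflTransGen_lam hs, .lam h₁'⟩

theorem exists_reflTransGen {M M' : Lam} (h : M ↠β M') :
    ∃ m, ∀ s N, Masked (s + m) M N → ∃ N', N ↠β N' ∧ Masked s M' N' := by
  induction h with
  | refl => exact ⟨0, fun s N h => ⟨N, .refl, h⟩⟩
  | tail _ hstep ih =>
    obtain ⟨m, hm⟩ := ih
    refine ⟨m + 1, fun s N h => ?_⟩
    obtain ⟨N₁, hs₁, h₁⟩ := hm (s + 1) N (by rwa [Nat.add_right_comm])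
    obtain ⟨N₂, hs₂, h₂⟩ := h₁.exists_reflTransGen_of_step hstep
    exact ⟨N₂, hs₁.trans hs₂, h₂⟩

theorem eq_T_or_numeral {s : ℕ} {N : Lam} (h : Masked s T N) :
    N = T ∨ ∃ j, 2 ≤ j ∧ N = sysA j := by
  cases h with
  | @numeral j _ hj => exact .inr ⟨j, by omega, rfl⟩
  | lam h =>
    cases h with
    | @numeral j _ hj => exact .inr ⟨j + 1, by omega, rfl⟩
    | lam h =>
      cases h with
      | var => exact .inl rfl
      | @numeral j _ hj => exact .inr ⟨j + 2, by omega, rfl⟩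

end Masked

def IsZeroTest (num : ℕ → Lam) (Z : Lam) : Prop :=
  BetaEq (app Z (num 0)) T ∧ ∀ n, BetaEq (app Z (num (n + 1))) F

def IsPredecessor (num : ℕ → Lam) (P : Lam) : Prop :=
  ∀ n, BetaEq (app P (num (n + 1))) (num n)

theorem not_isZeroTest_sysA (Z : Lam) : ¬ IsZeroTest sysA Z := by
  rintro ⟨hZero, hSucc⟩
  have hT : IsBetaNormal T := trivial
  obtain ⟨L, hZL, hTL⟩ := hZero.join
  rw [hT.eq_of_reflTransGen hTL] at hZL
  obtain ⟨m, hm⟩ := Masked.exists_reflTransGen hZL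
  obtain ⟨N, hN, hTN⟩ := hm 0 (app Z (sysA (m + 2))) (.app (.refl _ Z) (.numeral _ (by omega)))
  have hNF : BetaEq N F := ((BetaEq.of_reflTransGen hN).symm _ _).trans _ _ _ (hSucc (m + 1))
  rcases hTN.eq_T_or_numeral with rfl | ⟨j, hj, rfl⟩
  · exact absurd (hNF.eq_of_isBetaNormal hT trivial) (by decide)
  · exact sysA_ne_F hj (hNF.eq_of_isBetaNormal (isBetaNormal_sysA j) trivial)

theorem reflTransGen_app_pair_T (M N : Lam) : app (pair M N) T ↠β M := by
  have hpair : Step (app (pair M N) T) (app (app T M) N) := by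
    have hβ := Step.beta (app (app (var 0) (lift 0 M)) (lift 0 N)) T
    rwa [subst, subst, subst, subst_lift, subst_lift] at hβ
  have hT : Step (app T M) (Lam.lam (lift 0 M)) := by
    have hβ := Step.beta (Lam.lam (var 1)) M
    rwa [subst, subst] at hβ
  have hK : Step (app (Lam.lam (lift 0 M)) N) M := by
    simpa only [subst_lift] using Step.beta (lift 0 M) N
  exact .tail (.tail (.single hpair) (.appL N hT)) hK

def zeroTestOfPred (P : Lam) : Lam := lam (app (app (lift 0 P) (pair F (var 0))) T)

theorem step_app_zeroTestOfPred (P N : Lam) :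
    Step (app (zeroTestOfPred P) N) (app (app P (pair F N)) T) := by
  have hβ := Step.beta (app (app (lift 0 P) (pair F (var 0))) T) N
  rwa [subst, subst, subst_lift] at hβ

theorem closed_zeroTestOfPred {P : Lam} (hP : Closed P) : Closed (zeroTestOfPred P) := by
  intro n
  simp [zeroTestOfPred, hP.lift_eq_self, HasFree, hP (n + 1), pair, lift, F, T]

theorem isZeroTest_zeroTestOfPred {P : Lam} (hP : IsPredecessor sysB P) :
    IsZeroTest sysA (zeroTestOfPred P) := by
  have key (n : ℕ) : BetaEq (app (zeroTestOfPred P) (sysA n)) (app (sysB n) T) :=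
    (EqvGen.rel _ _ (step_app_zeroTestOfPred P (sysA n))).trans _ _ _ ((hP n).app_left T)
  exact ⟨(key 0).trans _ _ _ (BetaEq.of_reflTransGen (reflTransGen_app_pair_T _ _)),
    fun n => (key (n + 1)).trans _ _ _ (BetaEq.of_reflTransGen (reflTransGen_app_pair_T _ _))⟩

theorem not_isPredecessor_sysB (P : Lam) : ¬ IsPredecessor sysB P :=
  fun hP => not_isZeroTest_sysA _ (isZeroTest_zeroTestOfPred hP)

end Lam

/-- If `P` is a closed Predecessor for the numeral system `b`, then
`P' = λn.(P <F, n> T)` is a Zero Test for the numeral system `a`; consequently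
`b` has no Predecessor. -/
theorem statement5 :
    (∀ P : Lam, Lam.Closed P → (∀ n, Lam.BetaEq (Lam.app P (Lam.sysB (n + 1))) (Lam.sysB n)) →
      Lam.Closed (Lam.lam (Lam.app (Lam.app (Lam.lift 0 P) (Lam.pair Lam.F (Lam.var 0))) Lam.T)) ∧
      Lam.BetaEq
        (Lam.app (Lam.lam (Lam.app (Lam.app (Lam.lift 0 P) (Lam.pair Lam.F (Lam.var 0))) Lam.T))
          (Lam.sysA 0)) Lam.T ∧
      ∀ n, Lam.BetaEq
        (Lam.app (Lam.lam (Lam.app (Lam.app (Lam.lift 0 P) (Lam.pair Lam.F (Lam.var 0))) Lam.T))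
          (Lam.sysA (n + 1))) Lam.F) ∧
    ¬ ∃ P, Lam.Closed P ∧ ∀ n, Lam.BetaEq (Lam.app P (Lam.sysB (n + 1))) (Lam.sysB n) :=
  ⟨fun _ hP hPred => ⟨Lam.closed_zeroTestOfPred hP, Lam.isZeroTest_zeroTestOfPred hPred⟩,
    fun ⟨P, _, hPred⟩ => Lam.not_isPredecessor_sysB P hPred⟩
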